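/- Let q, n ≥ 1 and define f : {x,y}* → ZMod q as follows: for a word w over the two-letter alphabet {x, y}, if w contains at most n occurrences of x then f(w) is the number of y's in w modulo q; otherwise, let w' be the suffix of w strictly after the (n+1)-st occurrence of x counted from the right, and f(w) is the number of y's in w' modulo q. Define g : (Fin q)^n → {x,y}* by g(i₁,…,iₙ) = x y^{i₁} x y^{i₂} ⋯ x y^{iₙ}. Then for any κ₁ ≠ κ₂ in (Fin q)^n there exists a word w ∈ {x,y}* such that f(g(κ₁) ++ w) = 0 and f(g(κ₂) ++ w) ≠ 0. -/

import Mathlib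

/-- The two-letter alphabet `{x, y}`. -/
inductive XY : Type
  | x : XY
  | y : XY
deriving DecidableEq

/-- The longest suffix of `w` containing at most `n` occurrences of `x`
(equivalently, the part of `w` strictly after the `(n+1)`-st occurrence of `x`
from the right, or `w` itself if `w` has at most `n` occurrences of `x`). -/
def goodSuffix (n : ℕ) : List XY → List XY
  | [] => []
  | a :: w => if (a :: w).count XY.x ≤ n then a :: w else goodSuffix n w

/-- `f w` is the number of `y`'s in `w` after the `(n+1)`-st occurrence of `x`
from the right (all `y`'s if there are at most `n` occurrences of `x`), mod `q`. -/
def f (q n : ℕ) (w : List XY) : ZMod q := ((goodSuffix n w).count XY.y : ZMod q)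

/-- `g (i₁, …, iₙ) = x y^{i₁} x y^{i₂} ⋯ x y^{iₙ}`. -/
def g (q n : ℕ) (κ : Fin n → Fin q) : List XY :=
  (List.ofFn fun j : Fin n => XY.x :: List.replicate (κ j : ℕ) XY.y).flatten

/-!
Let `j` be the last index at which `κ₁` and `κ₂` differ. In `g κ ++ x^(j+1)` the `(n+1)`-st `x`
from the right is the one just before `y^(κ j)`, so the suffix read by `f` consists of `y^(κ j)`,
the blocks of `g κ` after position `j` (the same for `κ₁` and `κ₂`), and `x^(j+1)`. Appending
`y^c` with `c` chosen to cancel the count for `κ₁` modulo `q` leaves `κ₂ j - κ₁ j ≠ 0` for `κ₂`.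
-/

open XY List

lemma List.flatten_eq_append_getElem_append {α : Type*} (L : List (List α)) {j : ℕ}
    (hj : j < L.length) : L.flatten = (L.take j).flatten ++ L[j] ++ (L.drop (j + 1)).flatten := by
  conv_lhs => rw [← take_append_drop j L, drop_eq_getElem_cons hj]
  simp only [flatten_append, flatten_cons, append_assoc]

lemma ZMod.natCast_finVal_injective {q : ℕ} :
    Function.Injective fun i : Fin q => ((i : ℕ) : ZMod q) := by
  intro a b h
  simpa [ZMod.natCast_eq_natCast_iff', Nat.mod_eq_of_lt, Fin.ext_iff] using h

lemma goodSuffix_of_count_le {n : ℕ} {w : List XY} (h : w.count x ≤ n) :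
    goodSuffix n w = w := by
  cases w with
  | nil => rfl
  | cons a w => simp [goodSuffix, h]

lemma goodSuffix_append_of_lt {n : ℕ} (u : List XY) {s : List XY} (h : n < s.count x) :
    goodSuffix n (u ++ s) = goodSuffix n s := by
  induction u with
  | nil => rfl
  | cons a u ih =>
    have : ¬ (a :: (u ++ s)).count x ≤ n := by simp only [count_cons, count_append]; omega
    simpa [goodSuffix, this] using ih

lemma goodSuffix_append_x_cons {n : ℕ} (u : List XY) {s : List XY} (h : s.count x = n) :
    goodSuffix n (u ++ x :: s) = s := by
  rw [goodSuffix_append_of_lt u (by simp [h]), goodSuffix, if_neg (by simp [h]),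
    goodSuffix_of_count_le h.le]

def gBlocks {q n : ℕ} (κ : Fin n → Fin q) : List (List XY) :=
  ofFn fun i => x :: replicate (κ i : ℕ) y

def gTail {q n : ℕ} (κ : Fin n → Fin q) (j : ℕ) : List XY :=
  ((gBlocks κ).drop (j + 1)).flatten

lemma g_eq_append_x_cons {q n : ℕ} (κ : Fin n → Fin q) (j : Fin n) :
    ∃ u, g q n κ = u ++ x :: (replicate (κ j : ℕ) y ++ gTail κ j) := by
  refine ⟨((gBlocks κ).take j).flatten, ?_⟩
  rw [g, ← gBlocks, flatten_eq_append_getElem_append _ (j := j) (by simp [gBlocks]), gTail]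
  simp [gBlocks]

lemma count_x_gTail {q n : ℕ} (κ : Fin n → Fin q) (j : ℕ) :
    (gTail κ j).count x = n - (j + 1) := by
  have hblock : ∀ k, (x :: replicate k y).count x = 1 := by simp [count_replicate]
  simp [gTail, gBlocks, count_flatten, Function.comp_def, hblock, ofFn_const]

lemma gTail_congr {q n : ℕ} {κ₁ κ₂ : Fin n → Fin q} {j : ℕ}
    (h : ∀ i : Fin n, j < i → κ₁ i = κ₂ i) : gTail κ₁ j = gTail κ₂ j := by
  unfold gTail
  congr 1
  apply ext_getElem (by simp [gBlocks])
  intro i _ _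
  simp only [gBlocks, getElem_drop, List.getElem_ofFn]
  rw [h _ (by simp only; omega)]

lemma f_g_append_replicate {q n : ℕ} (κ : Fin n → Fin q) (j : Fin n) (c : ℕ) :
    f q n (g q n κ ++ (replicate (j + 1) x ++ replicate c y)) =
      ((κ j : ℕ) + (gTail κ j).count y + c : ℕ) := by
  obtain ⟨u, hu⟩ := g_eq_append_x_cons κ j
  rw [f, hu, append_assoc, cons_append, goodSuffix_append_x_cons u]
  · simp [count_replicate, add_assoc]
  · simp [count_replicate, count_x_gTail]

theorem separating_word_general (q n : ℕ)
    (κ₁ κ₂ : Fin n → Fin q) (hκ : κ₁ ≠ κ₂) :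
    ∃ w : List XY, f q n (g q n κ₁ ++ w) = 0 ∧ f q n (g q n κ₂ ++ w) ≠ 0 := by
  obtain ⟨j, hj, hlast⟩ :=
    (Fin.exists_iff_exists_maximal fun i => κ₁ i ≠ κ₂ i).mp (Function.ne_iff.mp hκ)
  have htail : gTail κ₁ j = gTail κ₂ j := gTail_congr fun i hi => not_not.mp (hlast i hi)
  have : NeZero q := ⟨(κ₁ j).pos.ne'⟩
  set t := (gTail κ₁ j).count y
  refine ⟨replicate (j + 1) x ++ replicate (-((κ₁ j : ℕ) + t : ZMod q)).val y, ?_, ?_⟩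
  · rw [f_g_append_replicate]
    push_cast
    rw [ZMod.natCast_zmod_val]
    ring
  · rw [f_g_append_replicate, ← htail]
    push_cast
    rw [ZMod.natCast_zmod_val]
    intro h
    exact hj (ZMod.natCast_finVal_injective (by linear_combination -h))

/-- For distinct `κ₁, κ₂ ∈ (Fin q)ⁿ` there is a word `w` with
`f (g κ₁ ++ w) = 0` and `f (g κ₂ ++ w) ≠ 0`. -/
theorem separating_word (q n : ℕ) (hq : 1 ≤ q) (hn : 1 ≤ n)
    (κ₁ κ₂ : Fin n → Fin q) (hκ : κ₁ ≠ κ₂) :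
    ∃ w : List XY, f q n (g q n κ₁ ++ w) = 0 ∧ f q n (g q n κ₂ ++ w) ≠ 0 :=
  separating_word_general q n κ₁ κ₂ hκ
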